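/- arXiv:2605.08002 — 3 statements merged into one kernel-verified Lean document; each statement's English description precedes it below -/
import Mathlib

section
/- Let 0 < b < c and q₁, q₂ > 0 be constants satisfying the continuity condition q₁·tanh(q₂(c − b)) = b, and set D = b²/2 + (q₁/q₂)·ln(cosh(q₂(c − b))). Define the hyperbolic tangent function ρ_{b,c} : ℝ → ℝ by ρ_{b,c}(z) = z²/2 for 0 ≤ |z| ≤ b, ρ_{b,c}(z) = D − (q₁/q₂)·ln(cosh(q₂(c − |z|))) for b ≤ |z| ≤ c, and ρ_{b,c}(z) = D for |z| ≥ c. Then ρ_{b,c} is a valid ρ-function: it is continuous and differentiable on ℝ, even, bounded, nondecreasing in |z| (i.e., nondecreasing on [0,∞)), satisfies ρ_{b,c}(0) = 0, and the map z ↦ ρ_{b,c}(√z) is concave on [0, ∞). -/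
/-- The hyperbolic tangent ρ-function `ρ_{b,c}` of Hampel et al. -/
noncomputable def rhoTanh (b c q₁ q₂ : ℝ) (z : ℝ) : ℝ :=
  if |z| ≤ b then z ^ 2 / 2
  else if |z| ≤ c then
    (b ^ 2 / 2 + (q₁ / q₂) * Real.log (Real.cosh (q₂ * (c - b))))
      - (q₁ / q₂) * Real.log (Real.cosh (q₂ * (c - |z|)))
  else b ^ 2 / 2 + (q₁ / q₂) * Real.log (Real.cosh (q₂ * (c - b)))

/-!
Write `ρ_{b,c}(z) = f(|z|)`, where the profile `f` is glued from `t²/2`, the logarithmic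
middle piece and the constant `D`. The continuity condition `q₁ tanh(q₂(c - b)) = b` makes the
one-sided derivatives agree at `b` (and they are both `0` at `c`), so `f` is differentiable with
derivative `ψ`, and `ρ` is differentiable at `0` because `ψ(0) = 0`. Monotonicity and
boundedness come from `ψ ≥ 0` on `[0, ∞)`. Since `(f ∘ √)'(z) = ψ(√z) / (2√z)`, concavity of
`z ↦ ρ(√z)` reduces to `ψ(t)/t` being antitone on `(0, ∞)`: it is `1` on `(0, b]`, a decreasing
nonnegative function over an increasing one on `[b, c]`, and `0` afterwards.
-/

open Real Set Filter

theorem Real.tanh_monotone : Monotone tanh := fun u v huv =>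
  (artanh_le_artanh_iff ⟨neg_one_lt_tanh u, tanh_lt_one u⟩ ⟨neg_one_lt_tanh v, tanh_lt_one v⟩).1
    (by rwa [artanh_tanh, artanh_tanh])

theorem Real.tanh_nonneg {x : ℝ} (hx : 0 ≤ x) : 0 ≤ tanh x :=
  tanh_zero ▸ tanh_monotone hx

theorem hasDerivAt_ite_le {g h g' h' : ℝ → ℝ} {a : ℝ} (hg : ∀ t, HasDerivAt g (g' t) t)
    (hh : ∀ t, HasDerivAt h (h' t) t) (hval : g a = h a) (hder : g' a = h' a) (t : ℝ) :
    HasDerivAt (fun t => if t ≤ a then g t else h t) (if t ≤ a then g' t else h' t) t := by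
  rcases lt_trichotomy t a with hta | rfl | hat
  · rw [if_pos hta.le]
    exact (hg t).congr_of_eventuallyEq <| eventually_of_mem (Iio_mem_nhds hta) fun x hx =>
      if_pos (le_of_lt hx)
  · rw [if_pos le_rfl]
    have hIic : HasDerivWithinAt (fun x => if x ≤ t then g x else h x) (g' t) (Iic t) t :=
      (hg t).hasDerivWithinAt.congr (fun x hx => if_pos hx) (if_pos le_rfl)
    have hIci : HasDerivWithinAt (fun x => if x ≤ t then g x else h x) (g' t) (Ici t) t := by
      refine hder ▸ (hh t).hasDerivWithinAt.congr (fun x hx => ?_) (by simp [hval])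
      rcases (mem_Ici.1 hx).eq_or_lt with rfl | hlt
      · simp [hval]
      · exact if_neg hlt.not_ge
    simpa [Iic_union_Ici] using hIic.union hIci
  · rw [if_neg hat.not_ge]
    exact (hh t).congr_of_eventuallyEq <| eventually_of_mem (Ioi_mem_nhds hat) fun x hx =>
      if_neg (not_le.2 hx)

theorem differentiable_comp_abs {f : ℝ → ℝ} (hf : Differentiable ℝ f) (hf0 : deriv f 0 = 0) :
    Differentiable ℝ (fun x => f |x|) := by
  intro x
  rcases eq_or_ne x 0 with rfl | hx
  · have h0 : HasDerivAt f 0 0 := by simpa only [hf0] using (hf 0).hasDerivAt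
    have hneg : HasDerivAt (fun x => f (-x)) 0 0 :=
      (h0.comp_of_eq (0 : ℝ) (hasDerivAt_neg (0 : ℝ)) neg_zero.symm).congr_deriv (by simp)
    have hIic : HasDerivWithinAt (fun x => f |x|) 0 (Iic 0) 0 :=
      hneg.hasDerivWithinAt.congr (fun x hx => by rw [abs_of_nonpos hx]) (by simp)
    have hIci : HasDerivWithinAt (fun x => f |x|) 0 (Ici 0) 0 :=
      h0.hasDerivWithinAt.congr (fun x hx => by rw [abs_of_nonneg hx]) (by rw [abs_zero])
    have habs : HasDerivAt (fun x => f |x|) 0 (0 : ℝ) := by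
      simpa [Iic_union_Ici] using hIic.union hIci
    exact habs.differentiableAt
  · exact (hf |x|).comp x (differentiableAt_abs hx)

theorem concaveOn_comp_sqrt {f ψ : ℝ → ℝ} (hf : ContinuousOn f (Ici 0))
    (hderiv : ∀ t > 0, HasDerivAt f (ψ t) t) (hanti : AntitoneOn (fun t => ψ t / t) (Ioi 0)) :
    ConcaveOn ℝ (Ici 0) (fun z => f √z) := by
  have hderiv' : ∀ x ∈ Ioi (0 : ℝ), HasDerivAt (fun z => f √z) (ψ √x / √x / 2) x := by
    intro x hx
    refine ((hderiv _ (sqrt_pos.2 hx)).comp x (hasDerivAt_sqrt (ne_of_gt hx))).congr_deriv ?_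
    ring
  refine AntitoneOn.concaveOn_of_deriv (convex_Ici 0)
    (hf.comp continuous_sqrt.continuousOn fun x _ => sqrt_nonneg x) ?_ ?_ <;> rw [interior_Ici]
  · exact fun x hx => (hderiv' x hx).differentiableAt.differentiableWithinAt
  · intro x hx y hy hxy
    rw [(hderiv' x hx).deriv, (hderiv' y hy).deriv]
    exact div_le_div_of_nonneg_right
      (hanti (sqrt_pos.2 hx) (sqrt_pos.2 hy) (sqrt_le_sqrt hxy)) zero_le_two

namespace RhoTanh

variable (b c q₁ q₂ : ℝ)

noncomputable def cap : ℝ := b ^ 2 / 2 + q₁ / q₂ * log (cosh (q₂ * (c - b)))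

noncomputable def mid (t : ℝ) : ℝ := cap b c q₁ q₂ - q₁ / q₂ * log (cosh (q₂ * (c - t)))

noncomputable def profile (t : ℝ) : ℝ :=
  if t ≤ b then t ^ 2 / 2 else if t ≤ c then mid b c q₁ q₂ t else cap b c q₁ q₂

noncomputable def psi (t : ℝ) : ℝ :=
  if t ≤ b then t else if t ≤ c then q₁ * tanh (q₂ * (c - t)) else 0

theorem rhoTanh_eq_profile_abs (z : ℝ) : rhoTanh b c q₁ q₂ z = profile b c q₁ q₂ |z| := by
  simp only [rhoTanh, profile, mid, cap, sq_abs]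

variable {b c q₁ q₂}

theorem hasDerivAt_mid (hq₂ : q₂ ≠ 0) (t : ℝ) :
    HasDerivAt (mid b c q₁ q₂) (q₁ * tanh (q₂ * (c - t))) t := by
  have hcosh := (((hasDerivAt_id t).const_sub c).const_mul q₂).cosh.log (cosh_pos _).ne'
  refine ((hcosh.const_mul (q₁ / q₂)).const_sub (cap b c q₁ q₂)).congr_deriv ?_
  simp only [id, tanh_eq_sinh_div_cosh]
  field_simp

theorem hasDerivAt_profile (hbc : b ≤ c) (hq₂ : q₂ ≠ 0)
    (hcont : q₁ * tanh (q₂ * (c - b)) = b) (t : ℝ) :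
    HasDerivAt (profile b c q₁ q₂) (psi b c q₁ q₂ t) t := by
  have hinner := hasDerivAt_ite_le (g := mid b c q₁ q₂) (h := fun _ => cap b c q₁ q₂) (a := c)
    (hasDerivAt_mid hq₂) (fun _ => hasDerivAt_const _ _) (by simp [mid]) (by simp)
  refine hasDerivAt_ite_le (fun t => by simpa using (hasDerivAt_pow 2 t).div_const 2) hinner
    ?_ (by rw [if_pos hbc, hcont]) t
  rw [if_pos hbc, mid, cap]
  ring

theorem profile_zero (hb : 0 ≤ b) : profile b c q₁ q₂ 0 = 0 := by
  simp [profile, hb]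

theorem profile_eq_cap (hbc : b < c) {t : ℝ} (ht : c ≤ t) :
    profile b c q₁ q₂ t = cap b c q₁ q₂ := by
  rw [profile, if_neg (hbc.trans_le ht).not_ge]
  rcases ht.eq_or_lt with rfl | hlt
  · simp [mid]
  · rw [if_neg hlt.not_ge]

theorem psi_nonneg (hq₁ : 0 ≤ q₁) (hq₂ : 0 ≤ q₂) {t : ℝ} (ht : 0 ≤ t) : 0 ≤ psi b c q₁ q₂ t := by
  unfold psi
  split_ifs with _ htc
  · exact ht
  · exact mul_nonneg hq₁ (tanh_nonneg (mul_nonneg hq₂ (sub_nonneg.2 htc)))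
  · exact le_rfl

theorem antitoneOn_psi_div (hq₁ : 0 ≤ q₁) (hq₂ : 0 ≤ q₂)
    (hcont : q₁ * tanh (q₂ * (c - b)) = b) :
    AntitoneOn (fun t => psi b c q₁ q₂ t / t) (Ioi 0) := by
  intro s hs t ht hst
  have htanh {u v : ℝ} (huv : u ≤ v) : q₁ * tanh (q₂ * (c - v)) ≤ q₁ * tanh (q₂ * (c - u)) :=
    mul_le_mul_of_nonneg_left (tanh_monotone (by nlinarith)) hq₁
  dsimp only
  by_cases htb : t ≤ b
  · rw [psi, psi, if_pos htb, if_pos (hst.trans htb), div_self (ne_of_gt ht),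
      div_self (ne_of_gt hs)]
  by_cases htc : t ≤ c
  · rw [psi, if_neg htb, if_pos htc]
    by_cases hsb : s ≤ b
    · rw [psi, if_pos hsb, div_self (ne_of_gt hs)]
      exact div_le_one_of_le₀ ((htanh (not_le.1 htb).le).trans (hcont.le.trans (not_le.1 htb).le))
        (le_of_lt ht)
    · rw [psi, if_neg hsb, if_pos (hst.trans htc)]
      exact div_le_div₀ (mul_nonneg hq₁ (tanh_nonneg (mul_nonneg hq₂ (by linarith))))
        (htanh hst) hs hst
  · rw [psi, if_neg htb, if_neg htc, zero_div]
    exact div_nonneg (psi_nonneg hq₁ hq₂ (le_of_lt hs)) (le_of_lt hs)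

theorem monotoneOn_profile (hbc : b ≤ c) (hq₁ : 0 ≤ q₁) (hq₂ : 0 < q₂)
    (hcont : q₁ * tanh (q₂ * (c - b)) = b) : MonotoneOn (profile b c q₁ q₂) (Ici 0) :=
  monotoneOn_of_hasDerivWithinAt_nonneg (convex_Ici 0)
    (fun t _ => (hasDerivAt_profile hbc hq₂.ne' hcont t).continuousAt.continuousWithinAt)
    (fun t _ => (hasDerivAt_profile hbc hq₂.ne' hcont t).hasDerivWithinAt)
    (fun _ ht => psi_nonneg hq₁ hq₂.le (interior_subset ht))

theorem profile_mem_Icc (hb : 0 ≤ b) (hbc : b < c) (hq₁ : 0 ≤ q₁) (hq₂ : 0 < q₂)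
    (hcont : q₁ * tanh (q₂ * (c - b)) = b) {t : ℝ} (ht : 0 ≤ t) :
    profile b c q₁ q₂ t ∈ Icc 0 (cap b c q₁ q₂) := by
  have hmono := monotoneOn_profile hbc.le hq₁ hq₂ hcont
  constructor
  · simpa only [profile_zero hb] using hmono self_mem_Ici ht ht
  · rw [← profile_eq_cap hbc (le_max_right t c)]
    exact hmono ht (ht.trans (le_max_left t c)) (le_max_left t c)

end RhoTanh

open RhoTanh

/-- The hyperbolic tangent function `ρ_{b,c}` is a valid ρ-function: it is continuous,
differentiable, even, bounded, nondecreasing on `[0,∞)`, vanishes at `0`, and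
`z ↦ ρ_{b,c}(√z)` is concave on `[0,∞)`. -/
theorem rhoTanh_isValidRhoFunction (b c q₁ q₂ : ℝ) (hb : 0 < b) (hbc : b < c)
    (hq₁ : 0 < q₁) (hq₂ : 0 < q₂)
    (hcont : q₁ * Real.tanh (q₂ * (c - b)) = b) :
    Continuous (rhoTanh b c q₁ q₂) ∧
    Differentiable ℝ (rhoTanh b c q₁ q₂) ∧
    (∀ z : ℝ, rhoTanh b c q₁ q₂ (-z) = rhoTanh b c q₁ q₂ z) ∧
    (∃ K : ℝ, ∀ z : ℝ, |rhoTanh b c q₁ q₂ z| ≤ K) ∧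
    MonotoneOn (rhoTanh b c q₁ q₂) (Set.Ici (0 : ℝ)) ∧
    rhoTanh b c q₁ q₂ 0 = 0 ∧
    ConcaveOn ℝ (Set.Ici (0 : ℝ)) (fun z => rhoTanh b c q₁ q₂ (Real.sqrt z)) := by
  have hderiv := hasDerivAt_profile hbc.le hq₂.ne' hcont
  have hdiff : Differentiable ℝ (profile b c q₁ q₂) := fun t => (hderiv t).differentiableAt
  have hρ : rhoTanh b c q₁ q₂ = fun z => profile b c q₁ q₂ |z| :=
    funext (rhoTanh_eq_profile_abs b c q₁ q₂)
  have hρ_eqOn : EqOn (rhoTanh b c q₁ q₂) (profile b c q₁ q₂) (Ici 0) := fun z hz => by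
    rw [rhoTanh_eq_profile_abs, abs_of_nonneg hz]
  have hρdiff : Differentiable ℝ (rhoTanh b c q₁ q₂) :=
    hρ ▸ differentiable_comp_abs hdiff (by rw [(hderiv 0).deriv, psi, if_pos hb.le])
  refine ⟨hρdiff.continuous, hρdiff, fun z => by simp only [hρ, abs_neg],
    ⟨cap b c q₁ q₂, fun z => ?_⟩, (monotoneOn_profile hbc.le hq₁.le hq₂ hcont).congr hρ_eqOn.symm,
    by rw [hρ_eqOn self_mem_Ici, profile_zero hb.le], ?_⟩
  · obtain ⟨h0, hcap⟩ := profile_mem_Icc hb.le hbc hq₁.le hq₂ hcont (abs_nonneg z)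
    rwa [rhoTanh_eq_profile_abs, abs_of_nonneg h0]
  · simp only [hρ, abs_of_nonneg (sqrt_nonneg _)]
    exact concaveOn_comp_sqrt hdiff.continuous.continuousOn (fun t _ => hderiv t)
      (antitoneOn_psi_div hq₁.le hq₂.le hcont)
end

section
/- Let (a, L) ∈ ℝ^d × Sym_d(ℝ), and let L = Q Λ Qᵀ be a spectral decomposition of L, where Q is a d×d orthogonal matrix and Λ = diag(λ₁,…,λ_d) contains the eigenvalues of L. Define ã = a if ‖a‖ ≤ M and ã = (M/‖a‖)·a otherwise, and define L̃ = Q Λ_c Qᵀ where Λ_c = diag(λ̃₁,…,λ̃_d) with λ̃_j = min{max{λ_j, c}, C}. Then (ã, L̃) belongs to Θ and is the metric projection of (a, L) onto Θ: it is the unique minimizer over (μ,Σ) ∈ Θ of ‖μ − a‖² + ‖Σ − L‖_F². -/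
open Matrix

/-- The parameter set `Θ = {(μ,Σ) : ‖μ‖ ≤ M, Σ symmetric, eigenvalues of Σ in [c,C]}`,
where the eigenvalue condition is expressed as `Σ - c·I ⪰ 0` and `C·I - Σ ⪰ 0`. -/
def Theta (d : ℕ) (M c C : ℝ) :
    Set (EuclideanSpace ℝ (Fin d) × Matrix (Fin d) (Fin d) ℝ) :=
  {p | ‖p.1‖ ≤ M ∧ p.2.IsSymm ∧
    (p.2 - c • (1 : Matrix (Fin d) (Fin d) ℝ)).PosSemidef ∧
    ((C • (1 : Matrix (Fin d) (Fin d) ℝ)) - p.2).PosSemidef}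

/-!
Both factors of `Θ` are closed convex sets and the objective is a squared Euclidean distance,
so a point `P ∈ Θ` is the unique nearest point to `X` as soon as the obtuse-angle condition
`⟪X - P, Y - P⟫ ≤ 0` holds for every `Y ∈ Θ`: then `‖Y - X‖² ≥ ‖P - X‖² + ‖Y - P‖²`.
For the ball this is Cauchy–Schwarz. For the matrices, after conjugating by `Q` the Frobenius
inner product `⟪L - L̃, Σ - L̃⟫` becomes `∑ⱼ (λⱼ - λ̃ⱼ) ((QᵀΣQ)ⱼⱼ - λ̃ⱼ)`, and every term is
nonpositive because `(QᵀΣQ)ⱼⱼ ∈ [c, C]` and `λ̃ⱼ` is the nearest point of `[c, C]` to `λⱼ`.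
-/

theorem sub_clamp_mul_clamp_sub_nonneg {c C x s : ℝ} (hcs : c ≤ s) (hsC : s ≤ C) :
    0 ≤ (s - min (max x c) C) * (min (max x c) C - x) := by
  rcases le_total x c with hxc | hcx
  · rw [max_eq_right hxc, min_eq_left (hcs.trans hsC)]
    nlinarith
  rcases le_total x C with hxC | hCx
  · simp [max_eq_left hcx, min_eq_left hxC]
  · rw [max_eq_left hcx, min_eq_right hCx]
    nlinarith

section InnerProductSpace

variable {E : Type*} [NormedAddCommGroup E] [InnerProductSpace ℝ E]

theorem norm_sub_sq_add_norm_sub_sq_le_of_inner_nonpos {a p q : E}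
    (h : inner ℝ (a - p) (q - p) ≤ 0) :
    ‖p - a‖ ^ 2 + ‖q - p‖ ^ 2 ≤ ‖q - a‖ ^ 2 := by
  have expand : ‖q - a‖ ^ 2 = ‖q - p‖ ^ 2 - 2 * inner ℝ (q - p) (a - p) + ‖a - p‖ ^ 2 := by
    rw [← norm_sub_sq_real, sub_sub_sub_cancel_right]
  rw [expand, norm_sub_rev p a, real_inner_comm]
  linarith

noncomputable def ballClip (M : ℝ) (a : E) : E :=
  if ‖a‖ ≤ M then a else (M / ‖a‖) • a

theorem norm_ballClip_le {M : ℝ} (hM : 0 ≤ M) (a : E) : ‖ballClip M a‖ ≤ M := by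
  unfold ballClip
  split_ifs with h
  · exact h
  · have ha : 0 < ‖a‖ := hM.trans_lt (not_le.mp h)
    rw [norm_smul, Real.norm_of_nonneg (by positivity), div_mul_cancel₀ _ ha.ne']

theorem inner_sub_ballClip_nonpos {M : ℝ} (a : E) {μ : E} (hμ : ‖μ‖ ≤ M) :
    inner ℝ (a - ballClip M a) (μ - ballClip M a) ≤ 0 := by
  unfold ballClip
  split_ifs with h
  · simp
  · have hMa : M < ‖a‖ := not_le.mp h
    have ha : 0 < ‖a‖ := (norm_nonneg μ).trans_lt (hμ.trans_lt hMa)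
    have hcs : inner ℝ a μ ≤ ‖a‖ * M := (real_inner_le_norm a μ).trans (by gcongr)
    have factor : inner ℝ (a - (M / ‖a‖) • a) (μ - (M / ‖a‖) • a)
        = (1 - M / ‖a‖) * (inner ℝ a μ - ‖a‖ * M) := by
      rw [show a - (M / ‖a‖) • a = (1 - M / ‖a‖) • a by rw [sub_smul, one_smul],
        real_inner_smul_left, inner_sub_right, real_inner_smul_right,
        real_inner_self_eq_norm_sq]
      field_simp
    rw [factor]
    exact mul_nonpos_of_nonneg_of_nonpos
      (sub_nonneg.mpr ((div_le_one ha).mpr hMa.le)) (by linarith)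

end InnerProductSpace

namespace Matrix

section Frobenius

variable {m n : Type*} [Fintype m] [Fintype n]

theorem sum_sq_sub_add_sum_sq_sub_le {A P L : Matrix m n ℝ}
    (h : 0 ≤ ∑ i, ∑ j, (A i j - P i j) * (P i j - L i j)) :
    ∑ i, ∑ j, (P i j - L i j) ^ 2 + ∑ i, ∑ j, (A i j - P i j) ^ 2
      ≤ ∑ i, ∑ j, (A i j - L i j) ^ 2 := by
  have expand : ∑ i, ∑ j, (A i j - L i j) ^ 2 = ∑ i, ∑ j, (P i j - L i j) ^ 2
      + ∑ i, ∑ j, (A i j - P i j) ^ 2 + 2 * ∑ i, ∑ j, (A i j - P i j) * (P i j - L i j) := by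
    simp only [Finset.mul_sum, ← Finset.sum_add_distrib]
    exact Finset.sum_congr rfl fun i _ => Finset.sum_congr rfl fun j _ => by ring
  linarith

theorem eq_of_sum_sq_sub_eq_zero {A B : Matrix m n ℝ} (h : ∑ i, ∑ j, (A i j - B i j) ^ 2 = 0) :
    A = B := by
  ext i j
  rw [Fintype.sum_eq_zero_iff_of_nonneg (fun i => by positivity)] at h
  have row := congrFun h i
  rw [Pi.zero_apply, Fintype.sum_eq_zero_iff_of_nonneg (fun j => by positivity)] at row
  simpa [sub_eq_zero] using congrFun row j

end Frobenius

section Conjugation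

variable {n : Type*} [Fintype n]

theorem diag_transpose_mul_mul_nonneg {B : Matrix n n ℝ} (hB : B.PosSemidef) (Q : Matrix n n ℝ)
    (i : n) : 0 ≤ (Qᵀ * B * Q) i i := by
  simpa [conjTranspose_eq_transpose_of_trivial] using
    (hB.conjTranspose_mul_mul_same Q).diag_nonneg (i := i)

variable [DecidableEq n] {Q : Matrix n n ℝ}

theorem isSymm_conj_diagonal (Q : Matrix n n ℝ) (v : n → ℝ) : (Q * diagonal v * Qᵀ).IsSymm := by
  simp [IsSymm, transpose_mul, Matrix.mul_assoc]

theorem conj_diagonal_sub_conj_diagonal (Q : Matrix n n ℝ) (v w : n → ℝ) :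
    Q * diagonal v * Qᵀ - Q * diagonal w * Qᵀ = Q * diagonal (v - w) * Qᵀ := by
  rw [← sub_mul, ← mul_sub, diagonal_sub]
  rfl

theorem posSemidef_conj_diagonal (Q : Matrix n n ℝ) {v : n → ℝ} (hv : 0 ≤ v) :
    (Q * diagonal v * Qᵀ).PosSemidef := by
  simpa [conjTranspose_eq_transpose_of_trivial] using
    (posSemidef_diagonal_iff.mpr hv).mul_mul_conjTranspose_same Q

theorem smul_one_eq_conj_diagonal (hQ : Q * Qᵀ = 1) (c : ℝ) :
    c • (1 : Matrix n n ℝ) = Q * diagonal (fun _ => c) * Qᵀ := by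
  rw [← smul_one_eq_diagonal, Matrix.mul_smul, mul_one, smul_mul, hQ]

theorem posSemidef_conj_diagonal_sub_smul_one (hQ : Q * Qᵀ = 1) {v : n → ℝ} {c : ℝ}
    (hv : ∀ j, c ≤ v j) : (Q * diagonal v * Qᵀ - c • 1).PosSemidef := by
  rw [smul_one_eq_conj_diagonal hQ, conj_diagonal_sub_conj_diagonal]
  exact posSemidef_conj_diagonal Q fun j => sub_nonneg.mpr (hv j)

theorem posSemidef_smul_one_sub_conj_diagonal (hQ : Q * Qᵀ = 1) {v : n → ℝ} {C : ℝ}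
    (hv : ∀ j, v j ≤ C) : (C • 1 - Q * diagonal v * Qᵀ).PosSemidef := by
  rw [smul_one_eq_conj_diagonal hQ, conj_diagonal_sub_conj_diagonal]
  exact posSemidef_conj_diagonal Q fun j => sub_nonneg.mpr (hv j)

theorem transpose_mul_conj_diagonal_mul (hQ : Qᵀ * Q = 1) (v : n → ℝ) :
    Qᵀ * (Q * diagonal v * Qᵀ) * Q = diagonal v := by
  simp only [← Matrix.mul_assoc, hQ, Matrix.one_mul]
  rw [Matrix.mul_assoc, hQ, Matrix.mul_one]

theorem le_diag_transpose_mul_mul {A : Matrix n n ℝ} {c : ℝ} (hQ : Qᵀ * Q = 1)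
    (hA : (A - c • 1).PosSemidef) (i : n) : c ≤ (Qᵀ * A * Q) i i := by
  have := diag_transpose_mul_mul_nonneg hA Q i
  rw [mul_sub, sub_mul, Matrix.mul_smul, mul_one, smul_mul, hQ] at this
  simpa using this

theorem diag_transpose_mul_mul_le {A : Matrix n n ℝ} {C : ℝ} (hQ : Qᵀ * Q = 1)
    (hA : (C • 1 - A).PosSemidef) (i : n) : (Qᵀ * A * Q) i i ≤ C := by
  have := diag_transpose_mul_mul_nonneg hA Q i
  rw [mul_sub, sub_mul, Matrix.mul_smul, mul_one, smul_mul, hQ] at this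
  simpa using this

theorem sum_mul_conj_diagonal (X Q : Matrix n n ℝ) (v : n → ℝ) :
    ∑ i, ∑ j, X i j * (Q * diagonal v * Qᵀ) i j = ∑ i, (Qᵀ * X * Q) i i * v i := by
  have hsymm : (Q * diagonal v * Qᵀ)ᵀ = Q * diagonal v * Qᵀ := isSymm_conj_diagonal Q v
  simp_rw [← hadamard_apply, sum_hadamard_eq, hsymm, ← Matrix.mul_assoc]
  rw [trace_mul_comm, ← Matrix.mul_assoc, ← Matrix.mul_assoc]
  simp [trace, mul_diagonal]

theorem sum_mul_conj_clamp_nonneg (hQ : Qᵀ * Q = 1) {A : Matrix n n ℝ} {c C : ℝ}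
    (hcA : (A - c • 1).PosSemidef) (hCA : (C • 1 - A).PosSemidef) (lam : n → ℝ) :
    let P := Q * diagonal (fun j => min (max (lam j) c) C) * Qᵀ
    let L := Q * diagonal lam * Qᵀ
    0 ≤ ∑ i, ∑ j, (A i j - P i j) * (P i j - L i j) := by
  intro P L
  have rotate : ∑ i, ∑ j, (A i j - P i j) * (P i j - L i j)
      = ∑ i, ((Qᵀ * A * Q) i i - min (max (lam i) c) C) * (min (max (lam i) c) C - lam i) := by
    simp_rw [← sub_apply A P, ← sub_apply P L, P, L, conj_diagonal_sub_conj_diagonal,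
      sum_mul_conj_diagonal, Matrix.mul_sub, Matrix.sub_mul, transpose_mul_conj_diagonal_mul hQ]
    simp only [sub_apply, diagonal_apply_eq, Pi.sub_apply]
  rw [rotate]
  exact Finset.sum_nonneg fun i _ => sub_clamp_mul_clamp_sub_nonneg
    (le_diag_transpose_mul_mul hQ hcA i) (diag_transpose_mul_mul_le hQ hCA i)

end Conjugation

end Matrix

theorem theta_projection_formula_general (d : ℕ) (M c C : ℝ)
    (hM : 0 < M) (hcC : c ≤ C)
    (a : EuclideanSpace ℝ (Fin d)) (L : Matrix (Fin d) (Fin d) ℝ)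
    (Q : Matrix (Fin d) (Fin d) ℝ) (lam : Fin d → ℝ)
    (hQ : Q * Qᵀ = 1) (hdecomp : L = Q * Matrix.diagonal lam * Qᵀ)
    (atil : EuclideanSpace ℝ (Fin d))
    (hatil : atil = if ‖a‖ ≤ M then a else (M / ‖a‖) • a)
    (Ltil : Matrix (Fin d) (Fin d) ℝ)
    (hLtil : Ltil = Q * Matrix.diagonal (fun j => min (max (lam j) c) C) * Qᵀ) :
    (atil, Ltil) ∈ Theta d M c C ∧
    (∀ p ∈ Theta d M c C,
      ‖atil - a‖ ^ 2 + ∑ i, ∑ j, (Ltil i j - L i j) ^ 2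
        ≤ ‖p.1 - a‖ ^ 2 + ∑ i, ∑ j, (p.2 i j - L i j) ^ 2) ∧
    (∀ p ∈ Theta d M c C,
      ‖p.1 - a‖ ^ 2 + ∑ i, ∑ j, (p.2 i j - L i j) ^ 2
        = ‖atil - a‖ ^ 2 + ∑ i, ∑ j, (Ltil i j - L i j) ^ 2 →
      p = (atil, Ltil)) := by
  change atil = ballClip M a at hatil
  have hmem : (atil, Ltil) ∈ Theta d M c C := by
    subst hatil hLtil
    exact ⟨norm_ballClip_le hM.le a, isSymm_conj_diagonal _ _,
      posSemidef_conj_diagonal_sub_smul_one hQ fun j => le_min (le_max_right _ _) hcC,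
      posSemidef_smul_one_sub_conj_diagonal hQ fun j => min_le_right _ _⟩
  have pythagoras : ∀ p ∈ Theta d M c C,
      (‖atil - a‖ ^ 2 + ∑ i, ∑ j, (Ltil i j - L i j) ^ 2) +
        (‖p.1 - atil‖ ^ 2 + ∑ i, ∑ j, (p.2 i j - Ltil i j) ^ 2)
      ≤ ‖p.1 - a‖ ^ 2 + ∑ i, ∑ j, (p.2 i j - L i j) ^ 2 := by
    rintro ⟨μ, A⟩ ⟨hμ, -, hcA, hCA⟩
    subst hatil hLtil hdecomp
    have hball := norm_sub_sq_add_norm_sub_sq_le_of_inner_nonpos (inner_sub_ballClip_nonpos a hμ)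
    have hmat := sum_sq_sub_add_sum_sq_sub_le
      (sum_mul_conj_clamp_nonneg (mul_eq_one_comm.mp hQ) hcA hCA lam)
    linarith
  refine ⟨hmem, fun p hp => ?_, fun p hp heq => ?_⟩ <;>
    obtain ⟨hμ, hA⟩ : 0 ≤ ‖p.1 - atil‖ ^ 2 ∧ 0 ≤ ∑ i, ∑ j, (p.2 i j - Ltil i j) ^ 2 :=
      ⟨by positivity, by positivity⟩
  · linarith [pythagoras p hp]
  · have hμ0 : ‖p.1 - atil‖ ^ 2 = 0 := by linarith [pythagoras p hp]
    have hA0 : ∑ i, ∑ j, (p.2 i j - Ltil i j) ^ 2 = 0 := by linarith [pythagoras p hp]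
    exact Prod.ext (by simpa [sub_eq_zero] using hμ0) (eq_of_sum_sq_sub_eq_zero hA0)

/-- The explicit formula `(ã, L̃)` — clipping `a` to the ball of radius `M` and clipping the
eigenvalues of `L = Q Λ Qᵀ` to `[c,C]` — gives the metric projection of `(a,L)` onto `Θ`:
it lies in `Θ` and is the unique minimizer of `‖μ − a‖² + ‖Σ − L‖_F²` over `Θ`. -/
theorem theta_projection_formula (d : ℕ) (hd : 0 < d) (M c C : ℝ)
    (hM : 0 < M) (hc : 0 < c) (hcC : c ≤ C)
    (a : EuclideanSpace ℝ (Fin d)) (L : Matrix (Fin d) (Fin d) ℝ) (hL : L.IsSymm)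
    (Q : Matrix (Fin d) (Fin d) ℝ) (lam : Fin d → ℝ)
    (hQ : Q * Qᵀ = 1) (hdecomp : L = Q * Matrix.diagonal lam * Qᵀ)
    (atil : EuclideanSpace ℝ (Fin d))
    (hatil : atil = if ‖a‖ ≤ M then a else (M / ‖a‖) • a)
    (Ltil : Matrix (Fin d) (Fin d) ℝ)
    (hLtil : Ltil = Q * Matrix.diagonal (fun j => min (max (lam j) c) C) * Qᵀ) :
    (atil, Ltil) ∈ Theta d M c C ∧
    (∀ p ∈ Theta d M c C,
      ‖atil - a‖ ^ 2 + ∑ i, ∑ j, (Ltil i j - L i j) ^ 2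
        ≤ ‖p.1 - a‖ ^ 2 + ∑ i, ∑ j, (p.2 i j - L i j) ^ 2) ∧
    (∀ p ∈ Theta d M c C,
      ‖p.1 - a‖ ^ 2 + ∑ i, ∑ j, (p.2 i j - L i j) ^ 2
        = ‖atil - a‖ ^ 2 + ∑ i, ∑ j, (Ltil i j - L i j) ^ 2 →
      p = (atil, Ltil)) :=
  theta_projection_formula_general d M c C hM hcC a L Q lam hQ hdecomp atil hatil Ltil hLtil
end

section
/- Let (Ω, F, P) be a probability space, let Θ be a compact subset of ℝ^m containing a point θ₀, and let π : Θ → ℝ^k be continuous and satisfy the separation (identification) condition: for every ε > 0, inf{‖π(θ) − π(θ₀)‖ : θ ∈ Θ, ‖θ − θ₀‖ ≥ ε} > 0. For each n, let π̂_n : Ω → ℝ^k be a random vector, let π̄_n : Ω × Θ → ℝ^k be such that ω ↦ sup_{θ∈Θ} ‖π̄_n(ω,θ) − π(θ)‖ is a random variable, and let θ̂_n : Ω → Θ be a random vector. Assume that, as n → ∞: (i) sup_{θ∈Θ} ‖π̄_n(·,θ) − π(θ)‖ → 0 in probability; (ii) ‖π̂_n − π(θ₀)‖ → 0 in probability; and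 (iii) ‖π̂_n − π̄_n(·, θ̂_n)‖ → 0 in probability. Then θ̂_n is consistent for θ₀, i.e., ‖θ̂_n − θ₀‖ → 0 in probability. -/
/-!
On the event `t < ‖θ̂_n − θ₀‖` the separation condition gives `δ ≤ ‖π(θ̂_n) − π(θ₀)‖`, and by the
triangle inequality through `π̄_n(·, θ̂_n)` and `π̂_n` one of the three discrepancies controlled by
(i), (ii), (iii) exceeds `δ / 4`. The event is thus covered by three events of vanishing
probability.
-/

open MeasureTheory Filter Topology

theorem tendsto_measure_zero_of_subset_union {Ω ι : Type*} [MeasurableSpace Ω] {μ : Measure Ω}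
    {l : Filter ι} {s t u : ι → Set Ω} (hsub : ∀ i, u i ⊆ s i ∪ t i)
    (hs : Tendsto (fun i => μ (s i)) l (𝓝 0)) (ht : Tendsto (fun i => μ (t i)) l (𝓝 0)) :
    Tendsto (fun i => μ (u i)) l (𝓝 0) := by
  have hst : Tendsto (fun i => μ (s i) + μ (t i)) l (𝓝 0) := by
    simpa using hs.add ht
  exact tendsto_of_tendsto_of_tendsto_of_le_of_le tendsto_const_nhds hst (fun _ => zero_le)
    fun i => (measure_mono (hsub i)).trans (measure_union_le _ _)

theorem quarter_lt_or_of_le_norm_sub {F : Type*} [SeminormedAddCommGroup F] {a b c d : F}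
    {δ : ℝ} (hδ : 0 < δ) (h : δ ≤ ‖a - d‖) :
    δ / 4 < ‖b - a‖ ∨ δ / 4 < ‖c - d‖ ∨ δ / 4 < ‖c - b‖ := by
  by_contra! hsmall
  obtain ⟨hba, hcd, hcb⟩ := hsmall
  have htri : ‖a - d‖ ≤ ‖a - b‖ + ‖b - c‖ + ‖c - d‖ := by
    simpa only [dist_eq_norm] using dist_triangle4 a b c d
  rw [norm_sub_rev a b, norm_sub_rev b c] at htri
  linarith

theorem indirect_inference_consistency_general (m k : ℕ)
    {Ω : Type*} [MeasurableSpace Ω] (P : Measure Ω)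
    (Θ : Set (EuclideanSpace ℝ (Fin m)))
    (θ₀ : EuclideanSpace ℝ (Fin m))
    (π : EuclideanSpace ℝ (Fin m) → EuclideanSpace ℝ (Fin k))
    (hsep : ∀ ε > (0 : ℝ), ∃ δ > (0 : ℝ), ∀ θ ∈ Θ, ε ≤ ‖θ - θ₀‖ → δ ≤ ‖π θ - π θ₀‖)
    (πhat : ℕ → Ω → EuclideanSpace ℝ (Fin k))
    (πbar : ℕ → Ω → EuclideanSpace ℝ (Fin m) → EuclideanSpace ℝ (Fin k))
    (θhat : ℕ → Ω → EuclideanSpace ℝ (Fin m))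
    (hθhatΘ : ∀ n ω, θhat n ω ∈ Θ)
    (h1 : ∀ t > (0 : ℝ), Tendsto
      (fun n => P {ω | ∃ θ ∈ Θ, t < ‖πbar n ω θ - π θ‖}) atTop (nhds 0))
    (h2 : ∀ t > (0 : ℝ), Tendsto
      (fun n => P {ω | t < ‖πhat n ω - π θ₀‖}) atTop (nhds 0))
    (h3 : ∀ t > (0 : ℝ), Tendsto
      (fun n => P {ω | t < ‖πhat n ω - πbar n ω (θhat n ω)‖}) atTop (nhds 0)) :
    ∀ t > (0 : ℝ), Tendsto
      (fun n => P {ω | t < ‖θhat n ω - θ₀‖}) atTop (nhds 0) := by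
  intro t ht
  obtain ⟨δ, hδ, hδsep⟩ := hsep t ht
  have hδ4 : 0 < δ / 4 := by positivity
  refine tendsto_measure_zero_of_subset_union (fun n ω hω => ?_) (h1 _ hδ4)
    (tendsto_measure_zero_of_subset_union (fun _ => subset_rfl) (h2 _ hδ4) (h3 _ hδ4))
  have hgap := hδsep _ (hθhatΘ n ω) (le_of_lt hω)
  rcases quarter_lt_or_of_le_norm_sub (b := πbar n ω (θhat n ω)) (c := πhat n ω) hδ hgap
    with hbar | hhat | hmatch
  · exact Or.inl ⟨_, hθhatΘ n ω, hbar⟩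
  · exact Or.inr (Or.inl hhat)
  · exact Or.inr (Or.inr hmatch)

/-- Consistency of the indirect inference estimator. Under (i) uniform convergence in
probability of the simulated auxiliary estimator `π̄_n(·,θ)` to the binding function `π(θ)`
over the compact identification set `Θ`, (ii) convergence in probability of the observed
auxiliary estimator `π̂_n` to `π(θ₀)`, and (iii) approximate matching
`‖π̂_n − π̄_n(·, θ̂_n)‖ → 0` in probability, any such sequence `θ̂_n` with values in `Θ`
is consistent for `θ₀`: `‖θ̂_n − θ₀‖ → 0` in probability. -/
theorem indirect_inference_consistency (m k : ℕ)
    {Ω : Type*} [MeasurableSpace Ω] (P : Measure Ω) [IsProbabilityMeasure P]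
    (Θ : Set (EuclideanSpace ℝ (Fin m))) (hΘcompact : IsCompact Θ)
    (θ₀ : EuclideanSpace ℝ (Fin m)) (hθ₀ : θ₀ ∈ Θ)
    (π : EuclideanSpace ℝ (Fin m) → EuclideanSpace ℝ (Fin k))
    (hπcont : ContinuousOn π Θ)
    (hsep : ∀ ε > (0 : ℝ), ∃ δ > (0 : ℝ), ∀ θ ∈ Θ, ε ≤ ‖θ - θ₀‖ → δ ≤ ‖π θ - π θ₀‖)
    (πhat : ℕ → Ω → EuclideanSpace ℝ (Fin k))
    (πbar : ℕ → Ω → EuclideanSpace ℝ (Fin m) → EuclideanSpace ℝ (Fin k))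
    (θhat : ℕ → Ω → EuclideanSpace ℝ (Fin m))
    (hθhatΘ : ∀ n ω, θhat n ω ∈ Θ)
    (h1 : ∀ t > (0 : ℝ), Tendsto
      (fun n => P {ω | ∃ θ ∈ Θ, t < ‖πbar n ω θ - π θ‖}) atTop (nhds 0))
    (h2 : ∀ t > (0 : ℝ), Tendsto
      (fun n => P {ω | t < ‖πhat n ω - π θ₀‖}) atTop (nhds 0))
    (h3 : ∀ t > (0 : ℝ), Tendsto
      (fun n => P {ω | t < ‖πhat n ω - πbar n ω (θhat n ω)‖}) atTop (nhds 0)) :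
    ∀ t > (0 : ℝ), Tendsto
      (fun n => P {ω | t < ‖θhat n ω - θ₀‖}) atTop (nhds 0) :=
  indirect_inference_consistency_general m k P Θ θ₀ π hsep πhat πbar θhat hθhatΘ h1 h2 h3
end
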